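/- arXiv:2509.09830 — 7 statements merged into one kernel-verified Lean document; each statement's English description precedes it below -/
import Mathlib

section
/- Let P^ℓ = conv({e_k - 2 e_j : j, k ∈ [ℓ], j ≠ k}) ⊂ ℝ^ℓ. For any a ∈ ℝ^ℓ, letting S = {i : a_i ≤ a_j for all j} and T = {i : a_i ≥ a_j for all j}, the face of P^ℓ minimizing the linear functional ⟨a, ·⟩ equals F_{S,T} = conv({e_s - 2 e_t : s ∈ S, t ∈ T}). -/
lemma aux_face {E : Type*} [AddCommGroup E] [Module ℝ E] (f : E →ₗ[ℝ] ℝ) (V : Set E) (c : ℝ)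
    (hV : ∀ v ∈ V, c ≤ f v) {p : E} (hp : p ∈ convexHull ℝ V) (hpc : f p ≤ c) :
    p ∈ convexHull ℝ {v ∈ V | f v = c} := by
  rw [convexHull_eq] at hp
  obtain ⟨ι, t, w, z, hw0, hw1, hz, hcm⟩ := hp
  have hfp : f p = ∑ i ∈ t, w i * f (z i) := by
    rw [← hcm, Finset.centerMass_eq_of_sum_1 _ _ hw1, map_sum]
    simp [map_smul]
  have hterm : ∀ i ∈ t, w i * (f (z i) - c) = 0 := by
    have hsum : ∑ i ∈ t, w i * (f (z i) - c) = 0 := by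
      have h1 : ∑ i ∈ t, w i * (f (z i) - c) = f p - c := by
        rw [hfp]
        simp [mul_sub, Finset.sum_sub_distrib, ← Finset.sum_mul, hw1]
      have h2 : 0 ≤ ∑ i ∈ t, w i * (f (z i) - c) :=
        Finset.sum_nonneg fun i hi => mul_nonneg (hw0 i hi) (by linarith [hV (z i) (hz i hi)])
      linarith
    intro i hi
    exact (Finset.sum_eq_zero_iff_of_nonneg (fun i hi =>
      mul_nonneg (hw0 i hi) (by linarith [hV (z i) (hz i hi)]))).mp hsum i hi
  rw [← hcm, ← Finset.centerMass_filter_ne_zero z]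
  apply Finset.centerMass_mem_convexHull
  · exact fun i hi => hw0 i (Finset.mem_filter.1 hi).1
  · rw [Finset.sum_filter_ne_zero, hw1]; exact one_pos
  · intro i hi
    obtain ⟨hit, hwi⟩ := Finset.mem_filter.1 hi
    refine ⟨hz i hit, ?_⟩
    have := hterm i hit
    rcases mul_eq_zero.1 this with h | h
    · exact absurd h hwi
    · linarith [h]

/-- For `P^ℓ = conv({e_k - 2e_j : j ≠ k})` and `a ∈ ℝ^ℓ`, with `S` the set of
indices where `a` is minimal and `T` where `a` is maximal, the face of `P^ℓ`
minimizing `⟨a,·⟩` is `conv({e_s - 2e_t : s ∈ S, t ∈ T})`. -/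
theorem face_of_Pl (ℓ : ℕ) (hℓ : 2 ≤ ℓ) (a : Fin ℓ → ℝ) :
    let P : Set (Fin ℓ → ℝ) := convexHull ℝ
      {p | ∃ j k : Fin ℓ, j ≠ k ∧ p = Pi.single k (1 : ℝ) - (2 : ℝ) • (Pi.single j (1 : ℝ) : Fin ℓ → ℝ)}
    let S : Set (Fin ℓ) := {i | ∀ j, a i ≤ a j}
    let T : Set (Fin ℓ) := {i | ∀ j, a j ≤ a i}
    {p ∈ P | ∀ q ∈ P, ∑ i, a i * p i ≤ ∑ i, a i * q i} =
      convexHull ℝ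
        {p | ∃ s ∈ S, ∃ t ∈ T, p = Pi.single s (1 : ℝ) - (2 : ℝ) • (Pi.single t (1 : ℝ) : Fin ℓ → ℝ)} := by
  intro P S T
  have hnt : Nontrivial (Fin ℓ) := Fin.nontrivial_iff_two_le.mpr hℓ
  -- the linear functional
  set f : (Fin ℓ → ℝ) →ₗ[ℝ] ℝ :=
    { toFun := fun p => ∑ i, a i * p i
      map_add' := by intro x y; simp [mul_add, Finset.sum_add_distrib]
      map_smul' := by intro c x; simp [Finset.mul_sum, mul_left_comm] } with hf
  have hfval : ∀ j k : Fin ℓ,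
      f (Pi.single k (1 : ℝ) - (2 : ℝ) • (Pi.single j (1 : ℝ) : Fin ℓ → ℝ)) = a k - 2 * a j := by
    intro j k
    simp [hf, Pi.single_apply, mul_sub, Finset.sum_sub_distrib, mul_ite, mul_comm,
      Finset.sum_ite_eq', Finset.mul_sum, ← Finset.sum_mul]
  -- min and max indices
  obtain ⟨s₀, hs₀⟩ : ∃ s₀, ∀ j, a s₀ ≤ a j := Finite.exists_min a
  obtain ⟨t₀, ht₀⟩ : ∃ t₀, ∀ j, a j ≤ a t₀ := Finite.exists_max a
  set c : ℝ := a s₀ - 2 * a t₀ with hc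
  set V : Set (Fin ℓ → ℝ) :=
    {p | ∃ j k : Fin ℓ, j ≠ k ∧ p = Pi.single k (1 : ℝ) - (2 : ℝ) • (Pi.single j (1 : ℝ) : Fin ℓ → ℝ)} with hV
  have hVc : ∀ v ∈ V, c ≤ f v := by
    rintro v ⟨j, k, hjk, rfl⟩
    rw [hfval]
    have := hs₀ k; have := ht₀ j; linarith
  have hPc : ∀ q ∈ P, c ≤ f q := by
    intro q hq
    exact convexHull_min hVc (convex_halfSpace_ge f.isLinear c) hq
  -- sums rewrite as f
  have hsum : ∀ p : Fin ℓ → ℝ, ∑ i, a i * p i = f p := fun p => rfl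
  apply Set.Subset.antisymm
  · -- LHS ⊆ RHS
    rintro p ⟨hpP, hpmin⟩
    -- there is a point of P with value exactly c
    have hex : ∃ q ∈ P, f q = c := by
      by_cases hst : s₀ ≠ t₀
      · refine ⟨Pi.single s₀ (1 : ℝ) - (2 : ℝ) • (Pi.single t₀ (1 : ℝ) : Fin ℓ → ℝ),
          subset_convexHull ℝ V ⟨t₀, s₀, fun h => hst h.symm, rfl⟩, ?_⟩
        rw [hfval]
      · push_neg at hst
        obtain ⟨j, hj⟩ := exists_ne s₀
        refine ⟨Pi.single s₀ (1 : ℝ) - (2 : ℝ) • (Pi.single j (1 : ℝ) : Fin ℓ → ℝ),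
          subset_convexHull ℝ V ⟨j, s₀, hj, rfl⟩, ?_⟩
        rw [hfval]
        have h1 : a j ≤ a s₀ := hst ▸ ht₀ j
        have h2 : a s₀ ≤ a j := hs₀ j
        have h3 : a t₀ = a s₀ := by rw [hst]
        rw [hc]; linarith
    obtain ⟨q, hqP, hqc⟩ := hex
    have hpc : f p ≤ c := by rw [← hqc]; simpa [hsum] using hpmin q hqP
    have := aux_face f V c hVc hpP hpc
    refine convexHull_mono ?_ this
    rintro v ⟨⟨j, k, hjk, rfl⟩, hvc⟩
    rw [hfval] at hvc
    have hk : a k = a s₀ := le_antisymm (by have := ht₀ j; linarith) (hs₀ k)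
    have hj : a j = a t₀ := le_antisymm (ht₀ j) (by have := hs₀ k; linarith)
    exact ⟨k, fun i => hk ▸ hs₀ i, j, fun i => hj ▸ ht₀ i, rfl⟩
  · -- RHS ⊆ LHS
    have hconv : Convex ℝ {p ∈ P | ∀ q ∈ P, ∑ i, a i * p i ≤ ∑ i, a i * q i} := by
      rintro x ⟨hxP, hx⟩ y ⟨hyP, hy⟩ α β hα hβ hαβ
      refine ⟨(convex_convexHull ℝ V) hxP hyP hα hβ hαβ, ?_⟩
      intro q hq
      have h1 := hx q hq; have h2 := hy q hq
      rw [hsum, hsum] at *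
      rw [map_add, map_smul, map_smul]
      calc α • f x + β • f y ≤ α • f q + β • f q := by
            apply add_le_add <;> [exact smul_le_smul_of_nonneg_left h1 hα;
              exact smul_le_smul_of_nonneg_left h2 hβ]
        _ = f q := by rw [← add_smul, hαβ, one_smul]
    apply convexHull_min _ hconv
    rintro v ⟨s, hs, t, ht, rfl⟩
    have has : a s = a s₀ := le_antisymm (hs s₀) (hs₀ s)
    have hat : a t = a t₀ := le_antisymm (ht₀ t) (ht t₀)
    have hval : f (Pi.single s (1 : ℝ) - (2 : ℝ) • (Pi.single t (1 : ℝ) : Fin ℓ → ℝ)) = c := by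
      rw [hfval, has, hat]
    by_cases hst : s ≠ t
    · refine ⟨subset_convexHull ℝ V ⟨t, s, fun h => hst h.symm, rfl⟩, ?_⟩
      intro q hq
      rw [hsum, hsum, hval]
      exact hPc q hq
    · push_neg at hst
      subst hst
      obtain ⟨j, hj⟩ := exists_ne s
      have hmem : Pi.single s (1 : ℝ) - (2 : ℝ) • (Pi.single s (1 : ℝ) : Fin ℓ → ℝ) ∈ P := by
        have h1 : (Pi.single j (1 : ℝ) - (2 : ℝ) • (Pi.single s (1 : ℝ) : Fin ℓ → ℝ)) ∈ P :=
          subset_convexHull ℝ V ⟨s, j, Ne.symm hj, rfl⟩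
        have h2 : (Pi.single s (1 : ℝ) - (2 : ℝ) • (Pi.single j (1 : ℝ) : Fin ℓ → ℝ)) ∈ P :=
          subset_convexHull ℝ V ⟨j, s, hj, rfl⟩
        have heq : Pi.single s (1 : ℝ) - (2 : ℝ) • (Pi.single s (1 : ℝ) : Fin ℓ → ℝ) =
            (2/3 : ℝ) • (Pi.single j (1 : ℝ) - (2 : ℝ) • (Pi.single s (1 : ℝ) : Fin ℓ → ℝ)) +
            (1/3 : ℝ) • (Pi.single s (1 : ℝ) - (2 : ℝ) • (Pi.single j (1 : ℝ) : Fin ℓ → ℝ)) := by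
          module
        rw [heq]
        exact (convex_convexHull ℝ V) h1 h2 (by norm_num) (by norm_num) (by norm_num)
      refine ⟨hmem, ?_⟩
      intro q hq
      rw [hsum, hsum, hval]
      exact hPc q hq
end

section
/- With P^ℓ = conv({e_k - 2 e_j : j ≠ k ∈ [ℓ]}) and S, T ⊆ [ℓ] nonempty and disjoint, the face F_{S,T} = conv({e_s - 2 e_t : s ∈ S, t ∈ T}) has affine dimension |S ∪ T| - 2 = |S| + |T| - 2. -/
/-- The face `F_{S,T} = conv({e_s - 2e_t : s ∈ S, t ∈ T})` has affine dimension
`|S| + |T| - 2` for nonempty disjoint `S, T ⊆ [ℓ]`. -/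
theorem face_dimension (ℓ : ℕ) (hℓ : 2 ≤ ℓ) (S T : Finset (Fin ℓ))
    (hS : S.Nonempty) (hT : T.Nonempty) (hST : Disjoint S T) :
    Module.finrank ℝ
        (affineSpan ℝ (convexHull ℝ
          {p : Fin ℓ → ℝ | ∃ s ∈ S, ∃ t ∈ T,
            p = Pi.single s (1 : ℝ) - (2 : ℝ) • (Pi.single t (1 : ℝ) : Fin ℓ → ℝ)})).direction =
      S.card + T.card - 2 := by
  classical
  obtain ⟨s0, hs0⟩ := hS
  obtain ⟨t0, ht0⟩ := hT
  have ht0S : t0 ∉ S := fun h => (Finset.disjoint_left.mp hST h) ht0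
  set V : Set (Fin ℓ → ℝ) := {p : Fin ℓ → ℝ | ∃ s ∈ S, ∃ t ∈ T,
      p = Pi.single s (1 : ℝ) - (2 : ℝ) • (Pi.single t (1 : ℝ) : Fin ℓ → ℝ)} with hVdef
  set p0 : Fin ℓ → ℝ := Pi.single s0 (1:ℝ) - (2:ℝ) • (Pi.single t0 (1:ℝ) : Fin ℓ → ℝ) with hp0def
  have hp0 : p0 ∈ V := ⟨s0, hs0, t0, ht0, rfl⟩
  set v : Fin ℓ → (Fin ℓ → ℝ) := fun i =>
    if i ∈ S then Pi.single i (1:ℝ) - Pi.single s0 (1:ℝ)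
    else Pi.single t0 (1:ℝ) - Pi.single i (1:ℝ) with hvdef
  set U : Finset (Fin ℓ) := S.erase s0 ∪ T.erase t0 with hUdef
  have hvs0 : v s0 = 0 := by simp [hvdef, hs0]
  have hvt0 : v t0 = 0 := by simp [hvdef, ht0S]
  -- members of U avoid s0 and t0
  have hUne : ∀ i ∈ U, i ≠ s0 ∧ i ≠ t0 := by
    intro i hi
    rcases Finset.mem_union.mp hi with h | h
    · exact ⟨Finset.ne_of_mem_erase h,
        fun e => (Finset.disjoint_left.mp hST (Finset.mem_of_mem_erase h)) (e ▸ ht0)⟩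
    · exact ⟨fun e => (Finset.disjoint_left.mp hST hs0) (e ▸ Finset.mem_of_mem_erase h),
        Finset.ne_of_mem_erase h⟩
  -- the difference formula
  have hdiff : ∀ s ∈ S, ∀ t ∈ T,
      (Pi.single s (1:ℝ) - (2:ℝ) • (Pi.single t (1:ℝ) : Fin ℓ → ℝ)) - p0
        = v s + (2:ℝ) • v t := by
    intro s hs t ht
    have hts : t ∉ S := fun h => (Finset.disjoint_left.mp hST h) ht
    simp only [hvdef, hs, hts, if_pos, if_neg, if_true, if_false, hp0def]
    module
  have hvmem : ∀ i, i ∈ S ∨ i ∈ T → v i ∈ Submodule.span ℝ (v '' (U : Set (Fin ℓ))) := by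
    intro i hi
    by_cases h0 : i = s0
    · rw [h0, hvs0]; exact Submodule.zero_mem _
    by_cases h1 : i = t0
    · rw [h1, hvt0]; exact Submodule.zero_mem _
    have : i ∈ U := by
      rcases hi with h | h
      · exact Finset.mem_union_left _ (Finset.mem_erase.mpr ⟨h0, h⟩)
      · exact Finset.mem_union_right _ (Finset.mem_erase.mpr ⟨h1, h⟩)
    exact Submodule.subset_span ⟨i, this, rfl⟩
  -- span equality
  have hspan : vectorSpan ℝ V = Submodule.span ℝ (v '' (U : Set (Fin ℓ))) := by
    rw [vectorSpan_eq_span_vsub_set_right ℝ hp0]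
    apply le_antisymm
    · rw [Submodule.span_le]
      rintro x ⟨p, ⟨s, hs, t, ht, rfl⟩, rfl⟩
      have : (Pi.single s (1:ℝ) - (2:ℝ) • (Pi.single t (1:ℝ) : Fin ℓ → ℝ)) -ᵥ p0
          = v s + (2:ℝ) • v t := hdiff s hs t ht
      dsimp only
      rw [vsub_eq_sub] at this ⊢
      rw [this]
      exact Submodule.add_mem _ (hvmem s (Or.inl hs))
        (Submodule.smul_mem _ _ (hvmem t (Or.inr ht)))
    · rw [Submodule.span_le]
      rintro x ⟨i, hi, rfl⟩
      rcases Finset.mem_union.mp hi with h | h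
      · have hiS : i ∈ S := Finset.mem_of_mem_erase h
        have : v i = (Pi.single i (1:ℝ) - (2:ℝ) • (Pi.single t0 (1:ℝ) : Fin ℓ → ℝ)) -ᵥ p0 := by
          simp only [hvdef, hiS, if_pos, if_true, hp0def, vsub_eq_sub]
          module
        rw [this]
        exact Submodule.subset_span ⟨_, ⟨i, hiS, t0, ht0, rfl⟩, rfl⟩
      · have hiT : i ∈ T := Finset.mem_of_mem_erase h
        have hiS : i ∉ S := fun hh => (Finset.disjoint_left.mp hST hh) hiT
        have : v i = (2⁻¹:ℝ) • ((Pi.single s0 (1:ℝ) - (2:ℝ) • (Pi.single i (1:ℝ) : Fin ℓ → ℝ)) -ᵥ p0) := by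
          simp only [hvdef, hiS, if_neg, if_false, hp0def, vsub_eq_sub]
          module
        rw [this]
        exact Submodule.smul_mem _ _
          (Submodule.subset_span ⟨_, ⟨s0, hs0, i, hiT, rfl⟩, rfl⟩)
  -- linear independence of v on U
  have hli : LinearIndependent ℝ (fun i : (U : Set (Fin ℓ)) => v (i : Fin ℓ)) := by
    rw [Fintype.linearIndependent_iff]
    intro g hg i
    have hi := i.2
    obtain ⟨hne0, hne1⟩ := hUne i (by exact_mod_cast hi)
    have hcoord := congrFun hg (i : Fin ℓ)
    have heval : ∀ j : (U : Set (Fin ℓ)), (g j • v (j : Fin ℓ)) (i : Fin ℓ)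
        = if j = i then (if (i : Fin ℓ) ∈ S then g j else -g j) else 0 := by
      intro j
      obtain ⟨hjne0, hjne1⟩ := hUne j (by exact_mod_cast j.2)
      by_cases hji : j = i
      · subst hji
        by_cases hiS : (j : Fin ℓ) ∈ S
        · simp [hvdef, hiS, Pi.single_apply, hne0.symm, Ne.symm hne0]
        · simp [hvdef, hiS, Pi.single_apply, hne1.symm, Ne.symm hne1]
      · have hji' : (j : Fin ℓ) ≠ (i : Fin ℓ) := fun e => hji (Subtype.ext e)
        by_cases hjS : (j : Fin ℓ) ∈ S
        · simp [hji, hvdef, hjS, Pi.single_apply, Ne.symm hji', (hUne i (by exact_mod_cast hi)).1, hne0]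
        · simp [hji, hvdef, hjS, Pi.single_apply, Ne.symm hji', hne1]
    rw [Finset.sum_apply] at hcoord
    rw [Finset.sum_congr rfl (fun j _ => heval j)] at hcoord
    rw [Finset.sum_ite_eq' Finset.univ i (fun j => if (i : Fin ℓ) ∈ S then g j else -g j)] at hcoord
    simp only [Finset.mem_univ, if_true] at hcoord
    by_cases hiS : (i : Fin ℓ) ∈ S
    · simpa [hiS] using hcoord
    · simpa [hiS, neg_eq_zero] using hcoord
  -- finish
  have hrange : Set.range (fun i : (U : Set (Fin ℓ)) => v (i : Fin ℓ))
      = v '' (U : Set (Fin ℓ)) := by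
    ext x
    constructor
    · rintro ⟨⟨i, hi⟩, rfl⟩; exact ⟨i, hi, rfl⟩
    · rintro ⟨i, hi, rfl⟩; exact ⟨⟨i, hi⟩, rfl⟩
  have hfr : Module.finrank ℝ (Submodule.span ℝ (v '' (U : Set (Fin ℓ))))
      = Fintype.card (U : Set (Fin ℓ)) := by
    rw [← hrange]
    exact finrank_span_eq_card hli
  have hcardU : U.card = S.card + T.card - 2 := by
    have hdisj : Disjoint (S.erase s0) (T.erase t0) :=
      (hST.mono (Finset.erase_subset _ _) (Finset.erase_subset _ _))
    rw [hUdef, Finset.card_union_of_disjoint hdisj,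
      Finset.card_erase_of_mem hs0, Finset.card_erase_of_mem ht0]
    have h1 : 1 ≤ S.card := Finset.card_pos.mpr ⟨s0, hs0⟩
    have h2 : 1 ≤ T.card := Finset.card_pos.mpr ⟨t0, ht0⟩
    omega
  rw [affineSpan_convexHull, direction_affineSpan, hspan, hfr]
  have hc : Fintype.card ((U : Set (Fin ℓ))) = U.card := by simp
  rw [hc]
  exact hcardU
end

section
/- For ℓ = 3, the polytope P̃^3 = conv({0} ∪ {e_i - 2 e_j : i ≠ j ∈ {1,2,3}}) ⊂ ℝ^3 has normalized volume 3! · Vol(P̃^3) = 13 = D_2. -/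
/-!
The six vertices `eᵢ - 2eⱼ` lie on the plane `x₀ + x₁ + x₂ = -1`, so `P̃³` is the cone from `0`
over a hexagon. Fanning the hexagon out from `e₀ - 2e₂` cuts `P̃³`, by three planes through `0`,
into four tetrahedra `conv {0, a, b, c}` with `|det (a, b, c)| = 2, 3, 6, 2`. A cut
`conv (s ∪ t ∪ u) = conv (s ∪ t) ∪ conv (s ∪ u)` is valid as soon as the segments from `t` to `u`
cross the plane inside `conv s`, and the two pieces overlap only inside the plane.

Such a tetrahedron is the image of the corner simplex `{x ≥ 0, ∑ xᵢ ≤ 1}` under the matrix with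
columns `a, b, c`, and the corner simplex has volume `1 / n!`: the `ℓ¹` unit ball, of volume
`2ⁿ / n!`, is the almost disjoint union of the `2ⁿ` reflections of the corner simplex in the
coordinate hyperplanes.
-/

open MeasureTheory Set

section Simplex

variable {ι : Type*}

def signFlip (ε : ι → Bool) (x : ι → ℝ) : ι → ℝ := fun i => if ε i then -x i else x i

lemma abs_signFlip (ε : ι → Bool) (x : ι → ℝ) (i : ι) : |signFlip ε x i| = |x i| := by
  unfold signFlip; split_ifs <;> simp

variable [Fintype ι]

lemma measurePreserving_signFlip (ε : ι → Bool) :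
    MeasurePreserving (signFlip ε) volume volume := by
  refine volume_preserving_pi (f := fun i (t : ℝ) => if ε i then -t else t) fun i => ?_
  cases ε i
  · exact MeasurePreserving.id volume
  · exact Measure.measurePreserving_neg volume

lemma setOf_sum_abs_le_one_eq_iUnion :
    {x : ι → ℝ | ∑ i, |x i| ≤ 1} =
      ⋃ ε : ι → Bool, signFlip ε ⁻¹' {x | (∀ i, 0 ≤ x i) ∧ ∑ i, x i ≤ 1} := by
  ext x
  simp only [mem_ofPred_eq, mem_iUnion, mem_preimage]
  constructor
  · intro hx
    have habs : ∀ i, signFlip (fun i => decide (x i < 0)) x i = |x i| := fun i => by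
      unfold signFlip
      split_ifs with h
      · exact (abs_of_neg (of_decide_eq_true h)).symm
      · exact (abs_of_nonneg (not_lt.mp (of_decide_eq_false (by simpa using h)))).symm
    exact ⟨_, fun i => habs i ▸ abs_nonneg (x i), by simpa only [habs] using hx⟩
  · rintro ⟨ε, hpos, hsum⟩
    have : ∀ i, signFlip ε x i = |x i| := fun i => by
      rw [← abs_signFlip ε, abs_of_nonneg (hpos i)]
    simpa only [this] using hsum

lemma aedisjoint_signFlip_preimage {ε δ : ι → Bool} (h : ε ≠ δ) :
    AEDisjoint volume (signFlip ε ⁻¹' {x | (∀ i, 0 ≤ x i) ∧ ∑ i, x i ≤ 1})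
      (signFlip δ ⁻¹' {x | (∀ i, 0 ≤ x i) ∧ ∑ i, x i ≤ 1}) := by
  obtain ⟨i, hi⟩ := Function.ne_iff.mp h
  have hnull : volume {x : ι → ℝ | x i = 0} = 0 := by
    rw [volume_pi]
    exact Measure.pi_hyperplane _ i 0
  refine measure_mono_null (fun x ⟨hxε, hxδ⟩ => ?_) hnull
  have h₁ := hxε.1 i
  have h₂ := hxδ.1 i
  simp only [signFlip] at h₁ h₂
  show x i = 0
  cases hε : ε i <;> cases hδ : δ i <;> simp_all <;> linarith

theorem volume_nonneg_sum_le_one [Nonempty ι] :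
    volume {x : ι → ℝ | (∀ i, 0 ≤ x i) ∧ ∑ i, x i ≤ 1} =
      ENNReal.ofReal (1 / (Fintype.card ι).factorial) := by
  classical
  set K := {x : ι → ℝ | (∀ i, 0 ≤ x i) ∧ ∑ i, x i ≤ 1}
  have hK : MeasurableSet K := by
    simp only [K, ofPred_and, ofPred_forall]
    exact (MeasurableSet.iInter fun i => measurableSet_le measurable_const (by fun_prop)).inter
      (measurableSet_le (by fun_prop) measurable_const)
  have hball : volume {x : ι → ℝ | ∑ i, |x i| ≤ 1} =
      2 ^ Fintype.card ι * ENNReal.ofReal (1 / (Fintype.card ι).factorial) := by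
    have := volume_sum_rpow_le ι le_rfl 1
    simp only [Real.rpow_one, div_one, one_add_one_eq_two, Real.Gamma_two, mul_one,
      Real.Gamma_nat_eq_factorial, ENNReal.ofReal_one, one_pow, one_mul] at this
    rw [this, div_eq_mul_one_div, ENNReal.ofReal_mul (by positivity),
      ENNReal.ofReal_pow zero_le_two, ENNReal.ofReal_ofNat]
  have hdecomp : volume {x : ι → ℝ | ∑ i, |x i| ≤ 1} = 2 ^ Fintype.card ι * volume K := by
    rw [setOf_sum_abs_le_one_eq_iUnion, measure_iUnion₀
      (fun ε δ h => aedisjoint_signFlip_preimage h)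
      (fun ε => (hK.preimage (measurePreserving_signFlip ε).measurable).nullMeasurableSet),
      tsum_fintype, Finset.sum_congr rfl fun ε _ =>
        (measurePreserving_signFlip ε).measure_preimage hK.nullMeasurableSet]
    simp
  rw [hdecomp] at hball
  exact (ENNReal.mul_right_inj (by simp) (by simp)).mp hball

theorem convexHull_insert_zero_range_single [DecidableEq ι] :
    convexHull ℝ (insert 0 (range fun i : ι => (Pi.single i 1 : ι → ℝ))) =
      {x | (∀ i, 0 ≤ x i) ∧ ∑ i, x i ≤ 1} := by
  refine Subset.antisymm (convexHull_min ?_ ?_) ?_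
  · rintro _ (rfl | ⟨i, rfl⟩)
    · simp
    · exact ⟨fun j => by simp [Pi.single_apply]; positivity, by simp⟩
  · intro x hx y hy a b ha hb hab
    refine ⟨fun i => add_nonneg (mul_nonneg ha (hx.1 i)) (mul_nonneg hb (hy.1 i)), ?_⟩
    simp only [Pi.add_apply, Pi.smul_apply, smul_eq_mul, Finset.sum_add_distrib,
      ← Finset.mul_sum]
    nlinarith [hx.2, hy.2]
  · rintro x ⟨hx, hsum⟩
    obtain h₀ | hpos := (Finset.sum_nonneg fun i _ => hx i).eq_or_lt
    · obtain rfl : x = 0 := funext fun i =>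
        (Finset.sum_eq_zero_iff_of_nonneg fun i _ => hx i).mp h₀.symm i (Finset.mem_univ i)
      exact subset_convexHull ℝ _ (mem_insert _ _)
    · have hnormalized : (∑ i, x i)⁻¹ • x ∈ stdSimplex ℝ ι :=
        ⟨fun i => mul_nonneg (inv_nonneg.mpr hpos.le) (hx i),
          by simp [← Finset.mul_sum, hpos.ne']⟩
      rw [← convexHull_rangle_single_eq_stdSimplex] at hnormalized
      simpa [smul_inv_smul₀ hpos.ne'] using (convex_convexHull ℝ _).smul_mem_of_zero_mem
        (subset_convexHull ℝ _ (mem_insert _ _)) (convexHull_mono (subset_insert _ _) hnormalized)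
        ⟨hpos.le, hsum⟩

theorem volume_convexHull_insert_zero_range [DecidableEq ι] [Nonempty ι] (v : ι → ι → ℝ) :
    volume (convexHull ℝ (insert 0 (range v))) =
      ENNReal.ofReal (|(Matrix.of v).det| / (Fintype.card ι).factorial) := by
  have himage : Matrix.toLin' (Matrix.of v).transpose '' insert 0 (range fun i => Pi.single i 1) =
      insert 0 (range v) := by
    rw [image_insert_eq, map_zero, ← range_comp]
    congr 2
    funext i
    simp
  rw [← himage, ← LinearMap.image_convexHull, Measure.addHaar_image_linearMap,
    LinearMap.det_toLin', Matrix.det_transpose, convexHull_insert_zero_range_single,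
    volume_nonneg_sum_le_one, ← ENNReal.ofReal_mul (abs_nonneg _), mul_one_div]

end Simplex

section ConvexHullSplit

variable {𝕜 E : Type*} [Field 𝕜] [LinearOrder 𝕜] [IsStrictOrderedRing 𝕜] [AddCommGroup E]
  [Module 𝕜 E]

theorem segment_subset_union_of_mem_segment {x y z : E} (hz : z ∈ segment 𝕜 x y) :
    segment 𝕜 x y ⊆ segment 𝕜 x z ∪ segment 𝕜 z y := by
  rw [segment_eq_image_lineMap] at hz
  obtain ⟨c, -, rfl⟩ := hz
  rw [← insert_endpoints_openSegment]
  rintro w (rfl | rfl | hw)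
  · exact .inl (left_mem_segment 𝕜 _ _)
  · exact .inr (right_mem_segment 𝕜 _ _)
  · rcases openSegment_subset_union x y ⟨c, rfl⟩ hw with rfl | hw | hw
    · exact .inl (right_mem_segment 𝕜 _ _)
    · exact .inl (openSegment_subset_segment 𝕜 _ _ hw)
    · exact .inr (openSegment_subset_segment 𝕜 _ _ hw)

theorem convexHull_union_union_eq_union {s t u : Set E} {c : 𝕜} (hc₀ : 0 ≤ c) (hc₁ : c ≤ 1)
    (hcross : ∀ p ∈ t, ∀ n ∈ u, (1 - c) • p + c • n ∈ convexHull 𝕜 s) :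
    convexHull 𝕜 (s ∪ t ∪ u) = convexHull 𝕜 (s ∪ t) ∪ convexHull 𝕜 (s ∪ u) := by
  rcases t.eq_empty_or_nonempty with rfl | ht
  · rw [union_empty, union_eq_right.mpr (convexHull_mono subset_union_left)]
  rcases u.eq_empty_or_nonempty with rfl | hu
  · rw [union_empty, union_empty, union_eq_left.mpr (convexHull_mono subset_union_left)]
  have hs : s.Nonempty :=
    convexHull_nonempty_iff.mp ⟨_, hcross _ ht.some_mem _ hu.some_mem⟩
  set S := convexHull 𝕜 s
  set T := convexHull 𝕜 t
  set U := convexHull 𝕜 u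
  have hcross' : ∀ p ∈ T, ∀ n ∈ U, (1 - c) • p + c • n ∈ S := by
    let L : E × E →ₗ[𝕜] E := (1 - c) • LinearMap.fst 𝕜 E E + c • LinearMap.snd 𝕜 E E
    have hL : L '' convexHull 𝕜 (t ×ˢ u) ⊆ S := by
      rw [LinearMap.image_convexHull]
      refine convexHull_min ?_ (convex_convexHull 𝕜 s)
      rintro _ ⟨⟨p, n⟩, ⟨hp, hn⟩, rfl⟩
      exact hcross p hp n hn
    intro p hp n hn
    exact hL ⟨(p, n), by rw [convexHull_prod]; exact ⟨hp, hn⟩, rfl⟩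
  have hTU : convexJoin 𝕜 T U ⊆ convexJoin 𝕜 T S ∪ convexJoin 𝕜 S U := by
    intro w hw
    obtain ⟨p, hp, n, hn, hw⟩ := mem_convexJoin.mp hw
    have hr : (1 - c) • p + c • n ∈ segment 𝕜 p n :=
      ⟨1 - c, c, sub_nonneg.mpr hc₁, hc₀, sub_add_cancel 1 c, rfl⟩
    rcases segment_subset_union_of_mem_segment hr hw with hw | hw
    · exact .inl (mem_convexJoin.mpr ⟨p, hp, _, hcross' p hp n hn, hw⟩)
    · exact .inr (mem_convexJoin.mpr ⟨_, hcross' p hp n hn, n, hn, hw⟩)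
  have hSS : convexJoin 𝕜 S S = S := by
    rw [← (convex_convexHull 𝕜 s).convexHull_union (convex_convexHull 𝕜 s) hs.convexHull
      hs.convexHull, union_self, (convex_convexHull 𝕜 s).convexHull_eq]
  refine Subset.antisymm ?_ (union_subset (convexHull_mono (by grind))
    (convexHull_mono (by grind)))
  rw [convexHull_union (hs.mono subset_union_left) hu, convexHull_union hs ht,
    convexHull_union hs hu, convexJoin_assoc]
  calc convexJoin 𝕜 S (convexJoin 𝕜 T U)
      ⊆ convexJoin 𝕜 S (convexJoin 𝕜 T S ∪ convexJoin 𝕜 S U) := convexJoin_mono_right hTU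
    _ = convexJoin 𝕜 S T ∪ convexJoin 𝕜 S U := by
      rw [convexJoin_union_right, convexJoin_comm T S, ← convexJoin_assoc,
        ← convexJoin_assoc, hSS]

end ConvexHullSplit

section HalfSpaces

variable {E : Type*} [NormedAddCommGroup E] [NormedSpace ℝ E] [MeasurableSpace E] [BorelSpace E]
  [FiniteDimensional ℝ E] (μ : Measure E) [μ.IsAddHaarMeasure]

theorem aedisjoint_of_forall_nonneg_of_forall_nonpos {φ : E →ₗ[ℝ] ℝ} (hφ : φ ≠ 0)
    {A B : Set E} (hA : ∀ x ∈ A, 0 ≤ φ x) (hB : ∀ x ∈ B, φ x ≤ 0) : AEDisjoint μ A B :=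
  measure_mono_null (fun x hx => show x ∈ LinearMap.ker φ from le_antisymm (hB x hx.2) (hA x hx.1))
    (Measure.addHaar_submodule μ _ (by simpa [LinearMap.ker_eq_top] using hφ))

theorem addHaar_convexHull_union_union {φ : E →ₗ[ℝ] ℝ} (hφ : φ ≠ 0) {s t u : Set E}
    (hsφ : ∀ x ∈ s, φ x = 0) (htφ : ∀ x ∈ t, 0 ≤ φ x) (huφ : ∀ x ∈ u, φ x ≤ 0) {c : ℝ}
    (hc₀ : 0 ≤ c) (hc₁ : c ≤ 1)
    (hcross : ∀ p ∈ t, ∀ n ∈ u, (1 - c) • p + c • n ∈ convexHull ℝ s) :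
    μ (convexHull ℝ (s ∪ t ∪ u)) = μ (convexHull ℝ (s ∪ t)) + μ (convexHull ℝ (s ∪ u)) := by
  rw [convexHull_union_union_eq_union hc₀ hc₁ hcross]
  refine measure_union₀ ((convex_convexHull ℝ _).nullMeasurableSet μ)
    (aedisjoint_of_forall_nonneg_of_forall_nonpos μ hφ
      (fun x hx => convexHull_min ?_ (convex_halfSpace_ge φ.isLinear 0) hx)
      (fun x hx => convexHull_min ?_ (convex_halfSpace_le φ.isLinear 0) hx))
  · rintro y (hy | hy)
    · exact (hsφ y hy).ge
    · exact htφ y hy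
  · rintro y (hy | hy)
    · exact (hsφ y hy).le
    · exact huφ y hy

end HalfSpaces

def vertex (i j : Fin 3) : Fin 3 → ℝ := Pi.single i 1 - (2 : ℝ) • Pi.single j 1

theorem dotProduct_vertex (w : Fin 3 → ℝ) (i j : Fin 3) : w ⬝ᵥ vertex i j = w i - 2 * w j := by
  simp [vertex, dotProduct_sub, dotProduct_smul, mul_comm]

theorem factorial_three_mul_volume_tetrahedron (a b c : Fin 3 → ℝ) :
    (Nat.factorial 3 : ENNReal) * volume (convexHull ℝ {0, a, b, c}) =
      ENNReal.ofReal |(Matrix.of ![a, b, c]).det| := by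
  have hrange : range ![a, b, c] = {a, b, c} := by
    rw [Matrix.range_cons, Matrix.range_cons, Matrix.range_cons, Matrix.range_empty, union_empty,
      singleton_union, singleton_union]
  rw [← hrange, volume_convexHull_insert_zero_range, Fintype.card_fin, ← ENNReal.ofReal_natCast,
    ← ENNReal.ofReal_mul (by positivity), mul_div_cancel₀ _ (by positivity)]

theorem zero_union_vertices_eq :
    {0} ∪ {p : Fin 3 → ℝ | ∃ i j : Fin 3, i ≠ j ∧
        p = Pi.single i (1 : ℝ) - (2 : ℝ) • (Pi.single j (1 : ℝ) : Fin 3 → ℝ)} =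
      {0, vertex 0 2, vertex 2 0} ∪ {vertex 1 2, vertex 1 0} ∪ {vertex 2 1, vertex 0 1} := by
  ext x
  constructor
  · rintro (rfl | ⟨i, j, hij, rfl⟩)
    · simp
    · change vertex i j ∈ _
      fin_cases i <;> fin_cases j <;> simp at hij ⊢
  · rintro (((rfl | rfl | rfl) | rfl | rfl) | rfl | rfl)
    · exact .inl rfl
    all_goals exact .inr ⟨_, _, by decide, rfl⟩

theorem volume_split_by_x₁ :
    volume (convexHull ℝ
        ({0, vertex 0 2, vertex 2 0} ∪ {vertex 1 2, vertex 1 0} ∪ {vertex 2 1, vertex 0 1})) =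
      volume (convexHull ℝ ({0, vertex 0 2, vertex 2 0} ∪ {vertex 1 2, vertex 1 0})) +
      volume (convexHull ℝ ({0, vertex 0 2, vertex 2 0} ∪ {vertex 2 1, vertex 0 1})) := by
  -- `φ` is `1` on `t` and `-2` on `u`, so the segments cross `ker φ` at `c = 1 / 3`, on the
  -- diagonal from `vertex 0 2` to `vertex 2 0`; the same pattern gives `c` in the other cuts.
  refine addHaar_convexHull_union_union volume (φ := dotProductEquiv ℝ (Fin 3) ![0, 1, 0])
    (by simp) (by simp [dotProduct_vertex, -Matrix.cons_dotProduct])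
    (by simp [dotProduct_vertex, -Matrix.cons_dotProduct])
    (by simp [dotProduct_vertex, -Matrix.cons_dotProduct]) (c := 1 / 3) (by norm_num)
    (by norm_num) ?_
  rintro p hp n hn
  refine segment_subset_convexHull (x := vertex 0 2) (y := vertex 2 0) (by simp) (by simp) ?_
  rcases hp with rfl | rfl <;> rcases hn with rfl | rfl
  · exact ⟨2 / 3, 1 / 3, by norm_num, by norm_num, by norm_num, by
      ext k; fin_cases k <;> simp [vertex] <;> norm_num⟩
  · exact ⟨7 / 9, 2 / 9, by norm_num, by norm_num, by norm_num, by
      ext k; fin_cases k <;> simp [vertex] <;> norm_num⟩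
  · exact ⟨2 / 9, 7 / 9, by norm_num, by norm_num, by norm_num, by
      ext k; fin_cases k <;> simp [vertex] <;> norm_num⟩
  · exact ⟨1 / 3, 2 / 3, by norm_num, by norm_num, by norm_num, by
      ext k; fin_cases k <;> simp [vertex] <;> norm_num⟩

theorem volume_split_upper_half :
    volume (convexHull ℝ ({0, vertex 0 2, vertex 2 0} ∪ {vertex 1 2, vertex 1 0})) =
      volume (convexHull ℝ {0, vertex 0 2, vertex 1 0, vertex 1 2}) +
      volume (convexHull ℝ {0, vertex 0 2, vertex 1 0, vertex 2 0}) := by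
  have hregroup : ({0, vertex 0 2, vertex 2 0} ∪ {vertex 1 2, vertex 1 0} : Set (Fin 3 → ℝ)) =
      {0, vertex 0 2, vertex 1 0} ∪ {vertex 1 2} ∪ {vertex 2 0} := by
    ext; simp only [mem_union, mem_insert_iff, mem_singleton_iff]; tauto
  rw [hregroup, addHaar_convexHull_union_union volume
    (φ := dotProductEquiv ℝ (Fin 3) ![2, 4, 1]) (by simp)
    (by simp [dotProduct_vertex, -Matrix.cons_dotProduct]; norm_num)
    (by simp [dotProduct_vertex, -Matrix.cons_dotProduct]; norm_num)
    (by simp [dotProduct_vertex, -Matrix.cons_dotProduct]; norm_num) (c := 2 / 5) (by norm_num)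
    (by norm_num) (by
      simp only [mem_singleton_iff, forall_eq]
      exact segment_subset_convexHull (x := vertex 0 2) (y := vertex 1 0) (by simp) (by simp)
        ⟨2 / 5, 3 / 5, by norm_num, by norm_num, by norm_num, by
          ext k; fin_cases k <;> simp [vertex] <;> norm_num⟩)]
  simp only [insert_union, singleton_union]

theorem volume_split_lower_half :
    volume (convexHull ℝ ({0, vertex 0 2, vertex 2 0} ∪ {vertex 2 1, vertex 0 1})) =
      volume (convexHull ℝ {0, vertex 0 2, vertex 2 1, vertex 2 0}) +
      volume (convexHull ℝ {0, vertex 0 2, vertex 2 1, vertex 0 1}) := by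
  have hregroup : ({0, vertex 0 2, vertex 2 0} ∪ {vertex 2 1, vertex 0 1} : Set (Fin 3 → ℝ)) =
      {0, vertex 0 2, vertex 2 1} ∪ {vertex 2 0} ∪ {vertex 0 1} := by
    ext; simp only [mem_union, mem_insert_iff, mem_singleton_iff]; tauto
  rw [hregroup, addHaar_convexHull_union_union volume
    (φ := dotProductEquiv ℝ (Fin 3) ![-4, -1, -2]) (by simp)
    (by simp [dotProduct_vertex, -Matrix.cons_dotProduct]; norm_num)
    (by simp [dotProduct_vertex, -Matrix.cons_dotProduct])
    (by simp [dotProduct_vertex, -Matrix.cons_dotProduct]; norm_num) (c := 3 / 4) (by norm_num)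
    (by norm_num) (by
      simp only [mem_singleton_iff, forall_eq]
      exact segment_subset_convexHull (x := vertex 0 2) (y := vertex 2 1) (by simp) (by simp)
        ⟨1 / 4, 3 / 4, by norm_num, by norm_num, by norm_num, by
          ext k; fin_cases k <;> simp [vertex] <;> norm_num⟩)]
  simp only [insert_union, singleton_union]

/-- For `ℓ = 3`, the normalized volume of `P̃³` equals `13 = D₂`. -/
theorem normalized_volume_three :
    ((Nat.factorial 3 : ENNReal)) *
        volume (convexHull ℝ
          ({0} ∪ {p : Fin 3 → ℝ | ∃ i j : Fin 3, i ≠ j ∧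
            p = Pi.single i (1 : ℝ) - (2 : ℝ) • (Pi.single j (1 : ℝ) : Fin 3 → ℝ)})) =
      13 := by
  rw [zero_union_vertices_eq, volume_split_by_x₁, volume_split_upper_half,
    volume_split_lower_half]
  simp only [mul_add, factorial_three_mul_volume_tetrahedron]
  simp [Matrix.det_fin_three, vertex]
  norm_num
end

section
/- Let d_1, d_2 > 0 and b_1, b_2, L_{111}, L_{112}, L_{122}, L_{222} ∈ ℝ. Then the set of solutions (x_1, x_2) ∈ (ℂ*)^2 to the system r_1(x) = 1 and r_2(x) = 1, where r_1(x) = b_1/(2x_1) - (1/(4d_1))(L_{111}/x_1 + 2L_{112}x_2/x_1² + 2L_{122}/x_1 - L_{122}x_1/x_2²) and r_2(x) = b_2/(2x_2) - (1/(4d_2))(L_{222}/x_2 + 2L_{122}x_1/x_2² + 2L_{112}/x_2 - L_{112}x_2/x_1²), is finite. -/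
/-!
Multiplying `rᵢ = 1` by `4 dᵢ x² y²` gives `Fᵢ(x, y) = 4 dᵢ x² y²` with `Fᵢ` a homogeneous cubic.
Then `d₂ F₁ - d₁ F₂` is a homogeneous cubic vanishing at every solution, so `t = y / x` is a root
of its dehomogenization, and the first equation recovers `x` from `t`: solutions inject into the
roots of a one-variable cubic. That cubic is nonzero as soon as there is a solution: if it vanishes
identically then `L112 = L122 = 0` and `F₁ = 0`, so the first equation would force the Einstein
constant `1` to be `0`.
-/

open Polynomial

variable {K : Type*} [Field K]

def einsteinTerm (d b A B C x y : K) : K :=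
  b / (2 * x) - 1 / (4 * d) * (A / x + 2 * B * y / x ^ 2 + 2 * C / x - C * x / y ^ 2)

theorem einsteinTerm_eq_one_iff [CharZero K] {d b A B C x y : K} (hd : d ≠ 0) (hx : x ≠ 0)
    (hy : y ≠ 0) :
    einsteinTerm d b A B C x y = 1 ↔
      (2 * d * b - A - 2 * C) * x * y ^ 2 - 2 * B * y ^ 3 + C * x ^ 3 = 4 * d * x ^ 2 * y ^ 2 := by
  rw [einsteinTerm, ← sub_eq_zero, ← sub_eq_zero (a := _ * x * y ^ 2 - _ + _)]
  have h : 4 * d * x ^ 2 * y ^ 2 ≠ 0 := by simp [hd, hx, hy]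
  convert (mul_eq_zero_iff_right h).symm using 2
  field_simp
  ring

section System

variable (d₁ d₂ b₁ b₂ L111 L112 L122 L222 : K)

/-- `r₁(x, y) = einsteinTerm d₁ b₁ L111 L112 L122 x y`, and `r₂` is `r₁` with the indices `1, 2`
swapped. -/
def einsteinSolutions : Set (K × K) :=
  {p | p.1 ≠ 0 ∧ p.2 ≠ 0 ∧ einsteinTerm d₁ b₁ L111 L112 L122 p.1 p.2 = 1 ∧
    einsteinTerm d₂ b₂ L222 L122 L112 p.2 p.1 = 1}

/-- `d₂` times the cleared first equation minus `d₁` times the second, at `(x, y) = (1, t)`. -/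
def ratioCubic : Cubic K :=
  ⟨-(2 * d₂ + d₁) * L112, d₂ * (2 * d₁ * b₁ - L111 - 2 * L122),
    -(d₁ * (2 * d₂ * b₂ - L222 - 2 * L112)), (d₂ + 2 * d₁) * L122⟩

local notation "𝒮" => einsteinSolutions d₁ d₂ b₁ b₂ L111 L112 L122 L222
local notation "𝒫" => ratioCubic d₁ d₂ b₁ b₂ L111 L112 L122 L222

variable {d₁ d₂ b₁ b₂ L111 L112 L122 L222} [CharZero K] {p : K × K}

theorem ratio_mem_roots_ratioCubic (hd₁ : d₁ ≠ 0) (hd₂ : d₂ ≠ 0) (h0 : (𝒫).toPoly ≠ 0)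
    (hp : p ∈ 𝒮) : p.2 / p.1 ∈ (𝒫).roots := by
  obtain ⟨hx, hy, e₁, e₂⟩ := hp
  rw [einsteinTerm_eq_one_iff hd₁ hx hy] at e₁
  rw [einsteinTerm_eq_one_iff hd₂ hy hx] at e₂
  rw [Cubic.mem_roots_iff h0, ratioCubic]
  field_simp
  linear_combination d₂ * e₁ - d₁ * e₂

theorem fst_eq_of_mem_einsteinSolutions (hd₁ : d₁ ≠ 0) (hp : p ∈ 𝒮) :
    p.1 = ((2 * d₁ * b₁ - L111 - 2 * L122) * (p.2 / p.1) ^ 2 - 2 * L112 * (p.2 / p.1) ^ 3 + L122)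
      / (4 * d₁ * (p.2 / p.1) ^ 2) := by
  obtain ⟨hx, hy, e₁, -⟩ := hp
  rw [einsteinTerm_eq_one_iff hd₁ hx hy] at e₁
  field_simp
  linear_combination -e₁

theorem einsteinSolutions_injOn_ratio (hd₁ : d₁ ≠ 0) :
    Set.InjOn (fun p : K × K ↦ p.2 / p.1) 𝒮 := by
  intro p hp q hq (h : p.2 / p.1 = q.2 / q.1)
  have h₁ : p.1 = q.1 := by
    rw [fst_eq_of_mem_einsteinSolutions hd₁ hp, fst_eq_of_mem_einsteinSolutions hd₁ hq, h]
  refine Prod.ext h₁ ?_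
  rw [← div_mul_cancel₀ p.2 hp.1, ← div_mul_cancel₀ q.2 hq.1, h, h₁]

theorem ratioCubic_ne_zero (hd₁ : d₁ ≠ 0) (hd₂ : d₂ ≠ 0) (h₂₁ : 2 * d₂ + d₁ ≠ 0)
    (h₁₂ : d₂ + 2 * d₁ ≠ 0) (hp : p ∈ 𝒮) : 𝒫 ≠ 0 := by
  obtain ⟨hx, hy, e₁, -⟩ := hp
  rw [einsteinTerm_eq_one_iff hd₁ hx hy] at e₁
  intro h
  have ha : -(2 * d₂ + d₁) * L112 = 0 := congrArg Cubic.a h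
  have hb : d₂ * (2 * d₁ * b₁ - L111 - 2 * L122) = 0 := congrArg Cubic.b h
  have hd : (d₂ + 2 * d₁) * L122 = 0 := congrArg Cubic.d h
  have hL112 := (mul_eq_zero.mp ha).resolve_left (neg_ne_zero.mpr h₂₁)
  have hL122 := (mul_eq_zero.mp hd).resolve_left h₁₂
  have hα := (mul_eq_zero.mp hb).resolve_left hd₂
  have : 4 * d₁ * p.1 ^ 2 * p.2 ^ 2 = 0 := by
    rw [← e₁, hα, hL112, hL122]
    ring
  simp [hd₁, hx, hy] at this

theorem einsteinSolutions_finite (hd₁ : d₁ ≠ 0) (hd₂ : d₂ ≠ 0) (h₂₁ : 2 * d₂ + d₁ ≠ 0)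
    (h₁₂ : d₂ + 2 * d₁ ≠ 0) : (𝒮).Finite := by
  rcases Set.eq_empty_or_nonempty 𝒮 with h | ⟨p, hp⟩
  · rw [h]
    exact Set.finite_empty
  have h0 : (𝒫).toPoly ≠ 0 :=
    (Cubic.toPoly_eq_zero_iff _).not.mpr (ratioCubic_ne_zero hd₁ hd₂ h₂₁ h₁₂ hp)
  exact Set.Finite.of_injOn (f := fun q : K × K ↦ q.2 / q.1)
    (fun q hq ↦ ratio_mem_roots_ratioCubic hd₁ hd₂ h0 hq)
    (einsteinSolutions_injOn_ratio hd₁) (𝒫).roots.finite_toSet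

end System

/-- The `ℓ = 2` homogeneous Einstein system with `λ = 1` has finitely many
solutions in `(ℂ*)²`. -/
theorem two_summand_finiteness (d₁ d₂ b₁ b₂ L111 L112 L122 L222 : ℝ)
    (hd₁ : 0 < d₁) (hd₂ : 0 < d₂) :
    Set.Finite {p : ℂ × ℂ | p.1 ≠ 0 ∧ p.2 ≠ 0 ∧
      (b₁ : ℂ) / (2 * p.1) -
          (1 / (4 * (d₁ : ℂ))) * ((L111 : ℂ) / p.1 + 2 * (L112 : ℂ) * p.2 / p.1 ^ 2 +
            2 * (L122 : ℂ) / p.1 - (L122 : ℂ) * p.1 / p.2 ^ 2) = 1 ∧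
      (b₂ : ℂ) / (2 * p.2) -
          (1 / (4 * (d₂ : ℂ))) * ((L222 : ℂ) / p.2 + 2 * (L122 : ℂ) * p.1 / p.2 ^ 2 +
            2 * (L112 : ℂ) / p.2 - (L112 : ℂ) * p.2 / p.1 ^ 2) = 1} := by
  have h₂₁ : (0 : ℝ) < 2 * d₂ + d₁ := by positivity
  have h₁₂ : (0 : ℝ) < d₂ + 2 * d₁ := by positivity
  exact einsteinSolutions_finite (K := ℂ)
    (by exact_mod_cast hd₁.ne') (by exact_mod_cast hd₂.ne')
    (by exact_mod_cast h₂₁.ne') (by exact_mod_cast h₁₂.ne')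
end

section
/- With scal(x) = ∑_{i=1}^{ℓ} d_i b_i/(2 x_i) - (1/4) ∑_{i,j,k=1}^{ℓ} L_{ijk} x_k/(x_i x_j), where L is symmetric in its three indices, one has the identity -d_i r_i(x) = x_i · ∂ scal/∂x_i for each i, where r_i(x) = b_i/(2x_i) - (1/(4d_i)) ∑_{j,k=1}^{ℓ} L_{ijk}(2x_k² - x_i²)/(x_i x_j x_k). -/
/-! Every summand of `scal` is a constant times a Laurent monomial in `x`, and the toric derivative
`xᵢ ∂/∂xᵢ` multiplies a Laurent monomial by its degree in `xᵢ`. For the cubic term `xₖ / (xₐ xⱼ)` this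
degree is `δₖᵢ - δₐᵢ - δⱼᵢ`; collapsing the Kronecker deltas and using the symmetry of `L` to move the
index `i` into the first slot leaves exactly the sums defining `rᵢ`. -/

open Finset Function

section

variable {ι : Type*} [DecidableEq ι]

theorem hasDerivAt_update_apply (x : ι → ℝ) (i a : ι) :
    HasDerivAt (fun t => update x i t a) ((Pi.single i 1 : ι → ℝ) a) (x i) :=
  hasDerivAt_pi.1 (hasDerivAt_update x i (x i)) a

variable {x : ι → ℝ} {i : ι}

theorem hasDerivAt_const_div_two_mul_update (hx : ∀ j, x j ≠ 0) (c : ℝ) (a : ι) :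
    HasDerivAt (fun t => c / (2 * update x i t a))
      (-(Pi.single i 1 : ι → ℝ) a * (c / (2 * x a)) / x i) (x i) := by
  refine ((hasDerivAt_const (x i) c).fun_div ((hasDerivAt_update_apply x i a).const_mul 2)
    (by simp [hx a])).congr_deriv ?_
  have := hx a
  rcases eq_or_ne a i with rfl | h
  · simp only [update_self, Pi.single_eq_same]
    field_simp
    ring
  · simp [h]

theorem hasDerivAt_update_div_update_mul (hx : ∀ j, x j ≠ 0) (a j k : ι) :
    HasDerivAt (fun t => update x i t k / (update x i t a * update x i t j))
      (((Pi.single i 1 : ι → ℝ) k - (Pi.single i 1 : ι → ℝ) a - (Pi.single i 1 : ι → ℝ) j) *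
        (x k / (x a * x j)) / x i) (x i) := by
  refine ((hasDerivAt_update_apply x i k).fun_div
    ((hasDerivAt_update_apply x i a).fun_mul (hasDerivAt_update_apply x i j))
    (by simp [hx a, hx j])).congr_deriv ?_
  have := hx a; have := hx j; have := hx k; have := hx i
  simp only [update_eq_self, Pi.single_apply]
  split_ifs <;> subst_vars <;> field_simp <;> ring

variable [Fintype ι]

noncomputable def scal (b d : ι → ℝ) (L : ι → ι → ι → ℝ) (x : ι → ℝ) : ℝ :=
  (∑ a, d a * b a / (2 * x a)) - (1 / 4) * ∑ a, ∑ j, ∑ k, L a j k * x k / (x a * x j)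

theorem hasDerivAt_scal_update (b d : ι → ℝ) (L : ι → ι → ι → ℝ) (hx : ∀ j, x j ≠ 0) :
    HasDerivAt (fun t => scal b d L (update x i t))
      ((-(d i * b i / (2 * x i)) - (1 / 4) * ∑ a, ∑ j, ∑ k, L a j k *
        (((Pi.single i 1 : ι → ℝ) k - (Pi.single i 1 : ι → ℝ) a - (Pi.single i 1 : ι → ℝ) j) *
          (x k / (x a * x j)))) / x i) (x i) := by
  have hlin := HasDerivAt.fun_sum (u := univ) fun a _ =>
    hasDerivAt_const_div_two_mul_update (i := i) hx (d a * b a) a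
  have hcub := HasDerivAt.fun_sum (u := univ) fun a _ => HasDerivAt.fun_sum (u := univ) fun j _ =>
    HasDerivAt.fun_sum (u := univ) fun k _ =>
      (hasDerivAt_update_div_update_mul (i := i) hx a j k).const_mul (L a j k)
  refine ((hlin.fun_sub (hcub.const_mul (1 / 4))).congr_deriv ?_).congr_of_eventuallyEq ?_
  · rw [Fintype.sum_eq_single i fun a ha => by simp [ha]]
    simp [sum_div, mul_div_assoc, sub_div, mul_sum]
  · simp [scal, mul_div_assoc]

theorem sum_toric_weight_eq_of_symm (L : ι → ι → ι → ℝ)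
    (hsym : ∀ i j k, L i j k = L j i k ∧ L i j k = L i k j) (hx : ∀ j, x j ≠ 0) :
    ∑ a, ∑ j, ∑ k, L a j k *
        (((Pi.single i 1 : ι → ℝ) k - (Pi.single i 1 : ι → ℝ) a - (Pi.single i 1 : ι → ℝ) j) *
          (x k / (x a * x j))) =
      -∑ j, ∑ k, L i j k * (2 * x k ^ 2 - x i ^ 2) / (x i * x j * x k) := by
  have hLi : ∀ a j, L a j i = L i a j := fun a j => by
    rw [(hsym a j i).2, (hsym a i j).1, (hsym i a j).2]
  have hL2 : ∀ a k, L a i k = L i a k := fun a k => (hsym a i k).1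
  simp only [mul_sub, sub_mul, sum_sub_distrib, Pi.single_apply, mul_ite, ite_mul, one_mul,
    mul_zero, zero_mul, sum_ite_eq', sum_ite_irrel, sum_const_zero, mem_univ, if_true, hLi, hL2]
  rw [← sum_sub_distrib, ← sum_sub_distrib, ← sum_neg_distrib]
  refine sum_congr rfl fun j _ => ?_
  rw [← sum_sub_distrib, ← sum_sub_distrib, ← sum_neg_distrib]
  refine sum_congr rfl fun k _ => ?_
  have := hx i; have := hx j; have := hx k
  field_simp
  ring

end

/-- The Ricci components are toric derivatives of scalar curvature:
`-dᵢ rᵢ(x) = xᵢ ∂scal/∂xᵢ`. -/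
theorem ricci_toric_derivative (ℓ : ℕ) (b d : Fin ℓ → ℝ)
    (L : Fin ℓ → Fin ℓ → Fin ℓ → ℝ)
    (hsym : ∀ i j k, L i j k = L j i k ∧ L i j k = L i k j)
    (i : Fin ℓ) (hdi : d i ≠ 0) (x : Fin ℓ → ℝ) (hx : ∀ j, x j ≠ 0) :
    -(d i) *
        (b i / (2 * x i) -
          (1 / (4 * d i)) * ∑ j, ∑ k,
            L i j k * (2 * (x k) ^ 2 - (x i) ^ 2) / (x i * x j * x k)) =
      x i *
        deriv (fun t : ℝ =>
          (∑ a, d a * b a / (2 * Function.update x i t a)) -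
            (1 / 4) * ∑ a, ∑ j, ∑ k,
              L a j k * Function.update x i t k /
                (Function.update x i t a * Function.update x i t j)) (x i) := by
  change _ = x i * deriv (fun t => scal b d L (update x i t)) (x i)
  rw [(hasDerivAt_scal_update b d L hx).deriv, mul_div_cancel₀ _ (hx i),
    sum_toric_weight_eq_of_symm L hsym hx]
  field_simp
  ring
end

section
/- Let d > 0 and consider the system for i = 1,2,3 with all d_i = d, L'_i = -2d, and L_{123} = d/4: -2d/x_i + (d/2)(x_j/(x_i x_k) + x_k/(x_i x_j) - x_i/(x_j x_k)) + 4d = 0 for {i,j,k} = {1,2,3}. Then x_1 = x_2 = x_3 = 3/8 is a solution, and it is the unique solution in (ℝ_{>0})³. -/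
/-!
Clearing denominators turns the `i`-th equation into `P(xᵢ, xⱼ, xₖ) = 0` for the cubic
`P(x, y, z) = y² + z² - x² - 4yz + 8xyz`, symmetric in its last two arguments. The difference
of two of these equations factors as `2 (y - x)(x + y - 2z)`, and the three resulting
alternatives force `x₁ = x₂ = x₃`; on the diagonal `P(x, x, x) = x² (8x - 3)`.
-/

section LedgerObata

variable {K : Type*} [Field K]

def ledgerObataPoly (x y z : K) : K :=
  y ^ 2 + z ^ 2 - x ^ 2 - 4 * y * z + 8 * x * y * z

lemma ledgerObataPoly_comm (x y z : K) : ledgerObataPoly x y z = ledgerObataPoly x z y := by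
  unfold ledgerObataPoly
  ring

lemma ledgerObataPoly_sub_swap (x y z : K) :
    ledgerObataPoly x y z - ledgerObataPoly y x z = 2 * (y - x) * (x + y - 2 * z) := by
  unfold ledgerObataPoly
  ring

lemma ledgerObataPoly_diag (x : K) : ledgerObataPoly x x x = x ^ 2 * (8 * x - 3) := by
  unfold ledgerObataPoly
  ring

variable [CharZero K]

lemma ledgerObata_lhs_eq (d : K) {x y z : K} (hx : x ≠ 0) (hy : y ≠ 0) (hz : z ≠ 0) :
    -2 * d / x + (d / 2) * (y / (x * z) + z / (x * y) - x / (y * z)) + 4 * d =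
      d * ledgerObataPoly x y z / (2 * x * y * z) := by
  unfold ledgerObataPoly
  field_simp
  ring

lemma ledgerObata_eq_zero_iff {d x y z : K} (hd : d ≠ 0) (hx : x ≠ 0) (hy : y ≠ 0)
    (hz : z ≠ 0) :
    -2 * d / x + (d / 2) * (y / (x * z) + z / (x * y) - x / (y * z)) + 4 * d = 0 ↔
      ledgerObataPoly x y z = 0 := by
  rw [ledgerObata_lhs_eq d hx hy hz]
  simp [hd, hx, hy, hz]

lemma eq_and_eq_of_mul_eq_zero {x y z : K} (h₁₂ : (y - x) * (x + y - 2 * z) = 0)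
    (h₁₃ : (z - x) * (x + z - 2 * y) = 0) (h₂₃ : (z - y) * (y + z - 2 * x) = 0) :
    x = y ∧ x = z := by
  rcases mul_eq_zero.mp h₁₂ with h₁₂ | h₁₂ <;>
  rcases mul_eq_zero.mp h₁₃ with h₁₃ | h₁₃ <;>
  rcases mul_eq_zero.mp h₂₃ with h₂₃ | h₂₃ <;>
  grind

lemma eq_and_eq_of_ledgerObataPoly_eq_zero {x y z : K} (hx : ledgerObataPoly x y z = 0)
    (hy : ledgerObataPoly y x z = 0) (hz : ledgerObataPoly z x y = 0) : x = y ∧ x = z := by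
  apply eq_and_eq_of_mul_eq_zero
  · linear_combination (hx - hy - ledgerObataPoly_sub_swap x y z) / 2
  · linear_combination (hx - hz - ledgerObataPoly_sub_swap x z y - ledgerObataPoly_comm x y z) / 2
  · linear_combination (hy - hz - ledgerObataPoly_sub_swap y z x - ledgerObataPoly_comm y x z
      - ledgerObataPoly_comm z y x) / 2

end LedgerObata

/-- Ledger–Obata spaces (generalized Wallach spaces of type (3)): the unique
positive solution is `x₁ = x₂ = x₃ = 3/8`. -/
theorem ledger_obata_unique_solution (d : ℝ) (hd : 0 < d)
    (x₁ x₂ x₃ : ℝ) (hx₁ : 0 < x₁) (hx₂ : 0 < x₂) (hx₃ : 0 < x₃) :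
    (-2 * d / x₁ + (d / 2) * (x₂ / (x₁ * x₃) + x₃ / (x₁ * x₂) - x₁ / (x₂ * x₃)) +
        4 * d = 0 ∧
      -2 * d / x₂ + (d / 2) * (x₁ / (x₂ * x₃) + x₃ / (x₁ * x₂) - x₂ / (x₁ * x₃)) +
        4 * d = 0 ∧
      -2 * d / x₃ + (d / 2) * (x₁ / (x₂ * x₃) + x₂ / (x₁ * x₃) - x₃ / (x₁ * x₂)) +
        4 * d = 0) ↔
      (x₁ = 3 / 8 ∧ x₂ = 3 / 8 ∧ x₃ = 3 / 8) := by
  have h₁ := ledgerObata_eq_zero_iff hd.ne' hx₁.ne' hx₂.ne' hx₃.ne'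
  have h₂ := ledgerObata_eq_zero_iff hd.ne' hx₂.ne' hx₁.ne' hx₃.ne'
  have h₃ := ledgerObata_eq_zero_iff hd.ne' hx₃.ne' hx₁.ne' hx₂.ne'
  rw [mul_comm x₂ x₁] at h₂
  rw [mul_comm x₃ x₂, mul_comm x₃ x₁] at h₃
  rw [h₁, h₂, h₃]
  constructor
  · rintro ⟨hP₁, hP₂, hP₃⟩
    obtain ⟨rfl, rfl⟩ := eq_and_eq_of_ledgerObataPoly_eq_zero hP₁ hP₂ hP₃
    rw [ledgerObataPoly_diag] at hP₁
    have hx : x₁ = 3 / 8 := by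
      have := (mul_eq_zero.mp hP₁).resolve_left (pow_ne_zero 2 hx₁.ne')
      linarith
    exact ⟨hx, hx, hx⟩
  · rintro ⟨rfl, rfl, rfl⟩
    norm_num [ledgerObataPoly]
end

section
/- For all integers n ≥ 1, the central Delannoy numbers satisfy the recurrence n·D_n = 3(2n-1)·D_{n-1} - (n-1)·D_{n-2}, where D_n = ∑_{k=0}^{n} 2^k (binomial(n,k))², with the convention D_{-1} = 1 (equivalently, the recurrence holds for n ≥ 2 together with D_0 = 1, D_1 = 3). -/
open Finset

/-- Integer absorption identity for binomial coefficients, valid for all `n k`. -/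
lemma absorbZ (n k : ℕ) :
    ((k : ℤ) + 1) * (n.choose (k+1) : ℤ) = ((n : ℤ) - k) * (n.choose k : ℤ) := by
  rcases le_or_gt (k+1) n with h | h
  · have h' : k ≤ n := Nat.le_of_succ_le h
    have := Nat.choose_succ_right_eq n k
    zify [h'] at this
    linarith
  · have h1 : n.choose (k+1) = 0 := Nat.choose_eq_zero_of_lt h
    rcases eq_or_lt_of_le (Nat.lt_succ_iff.mp h) with rfl | h2
    · simp [h1]
    · simp [h1, Nat.choose_eq_zero_of_lt h2]

/-- The WZ certificate function for the Delannoy recurrence. -/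
def gg (m j : ℕ) : ℤ :=
  2^(j+1) * (2*((j:ℤ) - (m+2)) * ((m+2).choose j : ℤ)^2
    + 3*(j:ℤ)*((m+2).choose j : ℤ)*((m+1).choose j : ℤ)
    + (j:ℤ)*((j:ℤ)-1)*((m+2).choose j : ℤ)*(m.choose j : ℤ)
    - ((j:ℤ)^2-1)*((m+1).choose j : ℤ)^2)

lemma gg_zero (m : ℕ) : gg m 0 = -4*(m:ℤ) - 6 := by
  simp [gg]
  ring

lemma gg_top (m : ℕ) : gg m (m+2) = 0 := by
  have h1 : (m+1).choose (m+2) = 0 := Nat.choose_eq_zero_of_lt (by omega)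
  have h2 : m.choose (m+2) = 0 := Nat.choose_eq_zero_of_lt (by omega)
  unfold gg
  rw [h1, h2]
  push_cast
  ring

lemma step (m j : ℕ) :
    ((m:ℤ)+2) * (2^(j+1) * ((m+2).choose (j+1) : ℤ)^2)
      + ((m:ℤ)+1) * (2^(j+1) * (m.choose (j+1) : ℤ)^2)
      - 3*(2*(m:ℤ)+3) * (2^(j+1) * ((m+1).choose (j+1) : ℤ)^2)
    = gg m (j+1) - gg m j := by
  have hP1 : ((m+2).choose (j+1) : ℤ)
      = ((m+1).choose j : ℤ) + ((m+1).choose (j+1) : ℤ) := by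
    exact_mod_cast Nat.choose_succ_succ (m+1) j
  have hP2 : ((m+1).choose (j+1) : ℤ)
      = (m.choose j : ℤ) + (m.choose (j+1) : ℤ) := by
    exact_mod_cast Nat.choose_succ_succ m j
  have hR0 := absorbZ m j
  have hR1 := absorbZ (m+1) j
  have hR2 := absorbZ (m+2) j
  push_cast at hR1 hR2 ⊢
  unfold gg
  push_cast
  set a0 := (m.choose j : ℤ)
  set a1 := ((m+1).choose j : ℤ)
  set a2 := ((m+2).choose j : ℤ)
  set b0 := (m.choose (j+1) : ℤ)
  set b1 := ((m+1).choose (j+1) : ℤ)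
  set b2 := ((m+2).choose (j+1) : ℤ)
  linear_combination (2:ℤ)^(j+1) * (
    ((-(j:ℤ)-(j:ℤ)^2)*a0 + (4-5*(j:ℤ)+(j:ℤ)^2+5*(m:ℤ))*a1 + (-2-2*(j:ℤ))*a2
      + (-2*(j:ℤ)-2*(j:ℤ)^2)*b0 + (-10*(j:ℤ)+5*(m:ℤ))*b1 + (6-4*(j:ℤ)+5*(m:ℤ))*b2) * hP1
    + (((j:ℤ)-(m:ℤ))*a0 + (9-10*(j:ℤ)+(j:ℤ)^2+10*(m:ℤ))*a1 + (-(j:ℤ)-(j:ℤ)^2)*a2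
      + (1+2*(j:ℤ)-(m:ℤ))*b0 + (-9-6*(j:ℤ)+2*(j:ℤ)^2-(m:ℤ))*b1) * hP2
    + (a0 + (-1-(j:ℤ))*a1 - (j:ℤ)*a2 + 2*b0) * hR0
    + ((-9+(j:ℤ))*a0 - 5*a1 + (-2+(j:ℤ))*a2 - 10*b0) * hR1
    + ((j:ℤ)*a0 + (2-(j:ℤ))*a1 + 2*a2) * hR2)

lemma keysum (m : ℕ) :
    ((m:ℤ)+2) * ∑ k ∈ range (m+3), (2:ℤ)^k * ((m+2).choose k : ℤ)^2
      + ((m:ℤ)+1) * ∑ k ∈ range (m+3), (2:ℤ)^k * (m.choose k : ℤ)^2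
    = 3*(2*(m:ℤ)+3) * ∑ k ∈ range (m+3), (2:ℤ)^k * ((m+1).choose k : ℤ)^2 := by
  have total : ∑ k ∈ range (m+3),
      (((m:ℤ)+2) * (2^k * ((m+2).choose k : ℤ)^2)
        + ((m:ℤ)+1) * (2^k * (m.choose k : ℤ)^2)
        - 3*(2*(m:ℤ)+3) * (2^k * ((m+1).choose k : ℤ)^2)) = 0 := by
    rw [Finset.sum_range_succ' _ (m+2)]
    have h1 : ∀ j ∈ range (m+2),
        (((m:ℤ)+2) * (2^(j+1) * ((m+2).choose (j+1) : ℤ)^2)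
          + ((m:ℤ)+1) * (2^(j+1) * (m.choose (j+1) : ℤ)^2)
          - 3*(2*(m:ℤ)+3) * (2^(j+1) * ((m+1).choose (j+1) : ℤ)^2))
        = gg m (j+1) - gg m j := fun j _ => step m j
    rw [Finset.sum_congr rfl h1, Finset.sum_range_sub (gg m), gg_top]
    simp [gg_zero]
    ring
  rw [Finset.sum_sub_distrib, Finset.sum_add_distrib, ← Finset.mul_sum,
    ← Finset.mul_sum, ← Finset.mul_sum] at total
  linarith

/-- The three-term recurrence for central Delannoy numbers:
`n Dₙ = 3(2n-1) Dₙ₋₁ - (n-1) Dₙ₋₂` for `n ≥ 2`, together with `D₀ = 1`, `D₁ = 3`. -/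
theorem delannoy_recurrence :
    (∑ k ∈ Finset.range 1, 2 ^ k * (Nat.choose 0 k) ^ 2) = 1 ∧
    (∑ k ∈ Finset.range 2, 2 ^ k * (Nat.choose 1 k) ^ 2) = 3 ∧
    ∀ n : ℕ, 2 ≤ n →
      n * (∑ k ∈ Finset.range (n + 1), 2 ^ k * (Nat.choose n k) ^ 2) +
          (n - 1) * (∑ k ∈ Finset.range (n - 1), 2 ^ k * (Nat.choose (n - 2) k) ^ 2) =
        3 * (2 * n - 1) *
          (∑ k ∈ Finset.range n, 2 ^ k * (Nat.choose (n - 1) k) ^ 2) := by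
  refine ⟨by decide, by decide, ?_⟩
  intro n hn
  obtain ⟨m, rfl⟩ : ∃ m, n = m + 2 := ⟨n - 2, by omega⟩
  have e1 : m + 2 - 1 = m + 1 := by omega
  have e2 : m + 2 - 2 = m := by omega
  have e3 : 2 * (m + 2) - 1 = 2*m + 3 := by omega
  rw [e1, e2, e3]
  zify
  have hA : ∑ k ∈ range (m+1), (2:ℤ)^k * (m.choose k : ℤ)^2
      = ∑ k ∈ range (m+3), (2:ℤ)^k * (m.choose k : ℤ)^2 := by
    refine Finset.sum_subset (Finset.range_subset_range.mpr (by omega)) ?_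
    intro x hx hnx
    have : m < x := by
      simp only [Finset.mem_range] at hx hnx; omega
    simp [Nat.choose_eq_zero_of_lt this]
  have hB : ∑ k ∈ range (m+2), (2:ℤ)^k * ((m+1).choose k : ℤ)^2
      = ∑ k ∈ range (m+3), (2:ℤ)^k * ((m+1).choose k : ℤ)^2 := by
    refine Finset.sum_subset (Finset.range_subset_range.mpr (by omega)) ?_
    intro x hx hnx
    have : m + 1 < x := by
      simp only [Finset.mem_range] at hx hnx; omega
    simp [Nat.choose_eq_zero_of_lt this]
  have hm3 : m + 2 + 1 = m + 3 := rfl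
  rw [hm3] at *
  have := keysum m
  rw [hA, hB]
  linarith
end
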